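/- arXiv:1906.09096 — 4 statements merged into one kernel-verified Lean document; each statement's English description precedes it below -/
import Mathlib

section
/- Suppose the leader set is empty (ℒ = ∅, so every agent is a follower), the digraph 𝒟[t] is strongly (T,t0,2F+1)-robust with respect to the misbehaving set 𝒜, every normal agent i ∈ 𝒱 \ 𝒜 applies the SW-MSR algorithm with parameter F and weight bound α, and there exist an integer t1 ≥ t0 + T and a constant c ∈ ℝ such that every misbehaving agent j ∈ 𝒜 sends the same constant value x_j^i[t] = c to all of its out-neighbors i for all t ≥ t1 − T. Then lim_{t→∞} max over i ∈ 𝒱 \ 𝒜 of |x_i[t] − c| = 0. -/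
open Finset Filter

/-- The MSR removal predicate: `R` is a valid removal set for the filtering step of an
MSR-type algorithm, where an agent with current value `x` receives values `v j` from the
index set `I`, removes all indices with value strictly greater than `x` if there are at
most `F` of them and otherwise exactly `F` indices carrying the `F` largest such values,
and analogously for values strictly less than `x`. -/
def MSRRemoval {β : Type*} [DecidableEq β] (F : ℕ) (I : Finset β) (v : β → ℝ) (x : ℝ)
    (R : Finset β) : Prop :=
  R ⊆ I ∧ (∀ j ∈ R, v j ≠ x) ∧
  (if (I.filter fun j => x < v j).card ≤ F
    then (I.filter fun j => x < v j) ⊆ R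
    else (R.filter fun j => x < v j).card = F ∧
      ∀ j ∈ R.filter (fun j => x < v j), ∀ k ∈ (I.filter fun j => x < v j) \ R, v k ≤ v j) ∧
  (if (I.filter fun j => v j < x).card ≤ F
    then (I.filter fun j => v j < x) ⊆ R
    else (R.filter fun j => v j < x).card = F ∧
      ∀ j ∈ R.filter (fun j => v j < x), ∀ k ∈ (I.filter fun j => v j < x) \ R, v j ≤ v k)

/-- A leader-follower network of `n ≥ 2` agents with time-varying in-neighbor sets,
leader set `L`, misbehaving set `A`, states `x`, received values `xr` (`xr t i j` is the
value agent `i` receives from agent `j` at time `t`), MSR parameter `F`, weight lower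
bound `α ∈ (0,1)`, initial time `t0`, window length `T`, and reference signal `fr`. -/
structure LFNetwork where
  V : Type
  fin : Fintype V
  dec : DecidableEq V
  card_ge : 2 ≤ @Fintype.card V fin
  Vnbr : ℤ → V → Finset V
  nbr_not_self : ∀ (t : ℤ) (i : V), i ∉ Vnbr t i
  t0 : ℤ
  T : ℕ
  L : Finset V
  A : Finset V
  x : ℤ → V → ℝ
  xr : ℤ → V → V → ℝ
  recv_normal : ∀ (t : ℤ) (i j : V), j ∉ A → xr t i j = x t j
  F : ℕ
  α : ℝ
  α_pos : 0 < α
  α_lt_one : α < 1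
  fr : ℤ → ℝ

namespace LFNetwork

variable (N : LFNetwork)

instance : Fintype N.V := N.fin
instance : DecidableEq N.V := N.dec

/-- The follower set `S_f = 𝒱 \ ℒ`. -/
def Sf : Finset N.V := Finset.univ \ N.L

/-- The normal followers `S_f^𝒩 = S_f \ 𝒜`. -/
def SfN : Finset N.V := N.Sf \ N.A

/-- The normal leaders `ℒ^𝒩 = ℒ \ 𝒜`. -/
def LN : Finset N.V := N.L \ N.A

/-- The inclusive neighbor set `𝒥_i[t] = 𝒱_i[t] ∪ {i}`. -/
def Jset (t : ℤ) (i : N.V) : Finset N.V := insert i (N.Vnbr t i)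

/-- The truncated window length `T' = min(T, t - t0)`. -/
def Tw (t : ℤ) : ℤ := min (N.T : ℤ) (t - N.t0)

/-- The windowed inclusive neighbor set `𝒥_i^{T'}[t] = ⋃_{τ=0}^{T'} 𝒥_i[t-τ]`. -/
noncomputable def JT (t : ℤ) (i : N.V) : Finset N.V :=
  (Finset.Icc (t - N.Tw t) t).biUnion fun s => N.Jset s i

/-- `τ_{ij}[t]`: the largest time `s ∈ [t - T', t]` with `j ∈ 𝒥_i[s]`. -/
noncomputable def tauij (t : ℤ) (i j : N.V) : ℤ :=
  WithBot.unbotD t (((Finset.Icc (t - N.Tw t) t).filter fun s => j ∈ N.Jset s i).max)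

/-- The misbehaving set `𝒜` is `F`-local w.r.t. `t0`. -/
def FLocal : Prop :=
  ∀ i : N.V, i ∉ N.A → ∀ t : ℤ, N.t0 ≤ t → (N.A ∩ N.Vnbr t i).card ≤ N.F

/-- Every normal leader propagates the reference signal: `x_l[t] = f_r[t]`. -/
def LeaderDyn : Prop :=
  ∀ l ∈ N.LN, ∀ t : ℤ, N.t0 ≤ t → N.x t l = N.fr t

/-- Agent `i` applies the SW-MSR algorithm with parameter `F` and weight bound `α`. -/
def FollowsSWMSR (i : N.V) : Prop :=
  ∀ t : ℤ, N.t0 ≤ t →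
    ∃ (R : Finset N.V) (w : N.V → ℝ),
      i ∉ R ∧
      MSRRemoval N.F (N.JT t i) (fun j => N.xr (N.tauij t i j) i j) (N.x t i) R ∧
      (∀ j ∈ N.JT t i \ R, N.α ≤ w j) ∧
      (∑ j ∈ N.JT t i \ R, w j) = 1 ∧
      N.x (t + 1) i = ∑ j ∈ N.JT t i \ R, w j * N.xr (N.tauij t i j) i j

/-- `M̄[t]`: the maximum of `x_i[t-τ]` over normal followers and normal leaders `i`
and `τ ∈ [0, T']`. -/
noncomputable def Mbar (t : ℤ) : ℝ :=
  sSup {y : ℝ | ∃ i ∈ N.SfN ∪ N.LN, ∃ τ : ℤ, 0 ≤ τ ∧ τ ≤ N.Tw t ∧ y = N.x (t - τ) i}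

/-- `m̄[t]`: the minimum of `x_i[t-τ]` over normal followers and normal leaders `i`
and `τ ∈ [0, T']`. -/
noncomputable def mbar (t : ℤ) : ℝ :=
  sInf {y : ℝ | ∃ i ∈ N.SfN ∪ N.LN, ∃ τ : ℤ, 0 ≤ τ ∧ τ ≤ N.Tw t ∧ y = N.x (t - τ) i}

/-- `V[t] = M̄[t] - m̄[t]`. -/
noncomputable def Vfun (t : ℤ) : ℝ := N.Mbar t - N.mbar t

/-- The time-varying digraph `𝒟[t]` is strongly `(T, t0, r)`-robust w.r.t. `S`:
for every `t ≥ t0 + T`, every nonempty `C ⊆ 𝒱 \ S` is `r`-reachable in the union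
digraph `𝒟^T[t]`. -/
def StronglyRobust (r : ℕ) (S : Finset N.V) : Prop :=
  ∀ t : ℤ, N.t0 + N.T ≤ t →
    ∀ C : Finset N.V, C.Nonempty → C ⊆ Finset.univ \ S →
      ∃ i ∈ C, r ≤ (((Finset.Icc (t - N.T) t).biUnion fun s => N.Vnbr s i) \ C).card

end LFNetwork

/-!
After time `t1` every value a normal agent can receive from a misbehaving neighbour is `c`,
so an upper bound `M ≥ c` on the normal states over one window of length `T + 1` persists
forever. Strong `(2F+1)`-robustness makes the set of normal agents still close to `M` lose an
agent in every window: some agent of that set has `2F+1` in-neighbours outside it, all sending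
values at most `M - ε`, and at most `2F` of them are filtered out. After one window per normal
agent (`roundLength` steps) the bound has improved to `c + (1 - α ^ roundLength) (M - c)`,
which gives geometric convergence from above; reflecting all values around `c` gives it from
below.
-/

open Finset Filter Topology

lemma MSRRemoval.card_le {β : Type*} [DecidableEq β] {F : ℕ} {I : Finset β} {v : β → ℝ}
    {x : ℝ} {R : Finset β} (h : MSRRemoval F I v x R) : R.card ≤ 2 * F := by
  obtain ⟨hRI, hne, hgt, hlt⟩ := h
  have hgt' : (R.filter fun j => x < v j).card ≤ F := by
    split_ifs at hgt with hc
    · exact (card_le_card (filter_subset_filter _ hRI)).trans hc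
    · exact hgt.1.le
  have hlt' : (R.filter fun j => v j < x).card ≤ F := by
    split_ifs at hlt with hc
    · exact (card_le_card (filter_subset_filter _ hRI)).trans hc
    · exact hlt.1.le
  have hcover : R ⊆ (R.filter fun j => x < v j) ∪ R.filter fun j => v j < x := fun j hj => by
    rcases (hne j hj).lt_or_gt with hlt | hgt
    · exact mem_union_right _ (mem_filter.2 ⟨hj, hlt⟩)
    · exact mem_union_left _ (mem_filter.2 ⟨hj, hgt⟩)
  calc R.card ≤ _ := card_le_card hcover
    _ ≤ _ := card_union_le _ _
    _ ≤ 2 * F := by omega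

lemma MSRRemoval.reflect {β : Type*} [DecidableEq β] {F : ℕ} {I : Finset β} {v : β → ℝ}
    {x : ℝ} {R : Finset β} (c : ℝ) (h : MSRRemoval F I v x R) :
    MSRRemoval F I (fun j => 2 * c - v j) (2 * c - x) R := by
  simp only [MSRRemoval, sub_lt_sub_iff_left, sub_le_sub_iff_left, ne_eq, sub_right_inj] at h ⊢
  exact ⟨h.1, h.2.1, h.2.2.2, h.2.2.1⟩

lemma sum_mul_le_sub_of_mem {ι : Type*} {S : Finset ι} {w v : ι → ℝ} {a M ε : ℝ}
    (ha : 0 ≤ a) (hw : ∀ j ∈ S, a ≤ w j) (hsum : ∑ j ∈ S, w j = 1)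
    (hv : ∀ j ∈ S, v j ≤ M) {j₀ : ι} (hj₀ : j₀ ∈ S) (hε : 0 ≤ ε) (hj₀v : v j₀ ≤ M - ε) :
    ∑ j ∈ S, w j * v j ≤ M - a * ε := by
  have hgap : a * ε ≤ ∑ j ∈ S, w j * (M - v j) :=
    calc a * ε ≤ w j₀ * (M - v j₀) :=
          mul_le_mul (hw j₀ hj₀) (by linarith) hε (ha.trans (hw j₀ hj₀))
      _ ≤ ∑ j ∈ S, w j * (M - v j) :=
          single_le_sum (fun j hj => mul_nonneg (ha.trans (hw j hj)) (sub_nonneg.2 (hv j hj))) hj₀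
  have hsplit : ∑ j ∈ S, w j * (M - v j) = M - ∑ j ∈ S, w j * v j := by
    simp only [mul_sub, sum_sub_distrib, ← sum_mul, hsum, one_mul]
  linarith

lemma exists_abs_le_of_finset {ι κ : Type*} [Fintype κ] (S : Finset ι) (f : ι → κ → ℝ) :
    ∃ K, 0 ≤ K ∧ ∀ s ∈ S, ∀ j, |f s j| ≤ K := by
  refine ⟨∑ s ∈ S, ∑ j, |f s j|, by positivity, fun s hs j => ?_⟩
  calc |f s j| ≤ ∑ j, |f s j| := single_le_sum (fun j _ => abs_nonneg (f s j)) (mem_univ j)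
    _ ≤ ∑ s ∈ S, ∑ j, |f s j| :=
        single_le_sum (f := fun s => ∑ j, |f s j|) (fun s _ => by positivity) hs

lemma tendsto_zero_of_eventually_le_pow_mul {α : Type*} {l : Filter α} {f : α → ℝ}
    {ρ K : ℝ} (hρ₀ : 0 ≤ ρ) (hρ₁ : ρ < 1) (hf₀ : ∀ t, 0 ≤ f t)
    (hf : ∀ k : ℕ, ∀ᶠ t in l, f t ≤ ρ ^ k * K) :
    Tendsto f l (𝓝 0) := by
  refine tendsto_order.2 ⟨fun a ha => Eventually.of_forall fun t => ha.trans_le (hf₀ t),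
    fun b hb => ?_⟩
  have hgeom : Tendsto (fun k : ℕ => ρ ^ k * K) atTop (𝓝 0) := by
    simpa using (tendsto_pow_atTop_nhds_zero_of_lt_one hρ₀ hρ₁).mul_const K
  obtain ⟨k, hk⟩ := (hgeom.eventually (gt_mem_nhds hb)).exists
  exact (hf k).mono fun t ht => ht.trans_lt hk

namespace LFNetwork

variable (N : LFNetwork)

lemma Tw_nonneg {u : ℤ} (hu : N.t0 ≤ u) : 0 ≤ N.Tw u :=
  le_min (Int.natCast_nonneg _) (by omega)

lemma Tw_of_le {u : ℤ} (hu : N.t0 + N.T ≤ u) : N.Tw u = N.T :=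
  min_eq_left (by omega)

lemma mem_JT_self {u : ℤ} (hu : N.t0 ≤ u) (i : N.V) : i ∈ N.JT u i :=
  mem_biUnion.2 ⟨u, mem_Icc.2 ⟨by linarith [N.Tw_nonneg hu], le_rfl⟩, mem_insert_self _ _⟩

lemma biUnion_Vnbr_subset_JT {u : ℤ} (hu : N.t0 + N.T ≤ u) (i : N.V) :
    (Icc (u - N.T) u).biUnion (fun s => N.Vnbr s i) ⊆ N.JT u i := by
  rw [JT, N.Tw_of_le hu]
  exact biUnion_mono fun s _ => subset_insert _ _

lemma tauij_spec {u : ℤ} {i j : N.V} (h : j ∈ N.JT u i) :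
    N.tauij u i j ∈ Icc (u - N.Tw u) u ∧ j ∈ N.Jset (N.tauij u i j) i := by
  obtain ⟨s, hs, hjs⟩ := mem_biUnion.1 h
  obtain ⟨m, hm⟩ := max_of_nonempty (s := (Icc (u - N.Tw u) u).filter fun s => j ∈ N.Jset s i)
    ⟨s, mem_filter.2 ⟨hs, hjs⟩⟩
  rw [tauij, hm]
  exact mem_filter.1 (mem_of_max hm)

lemma tauij_self {u : ℤ} (hu : N.t0 ≤ u) (i : N.V) : N.tauij u i i = u := by
  have hmem : u ∈ (Icc (u - N.Tw u) u).filter fun s => i ∈ N.Jset s i :=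
    mem_filter.2 ⟨mem_Icc.2 ⟨by linarith [N.Tw_nonneg hu], le_rfl⟩, mem_insert_self _ _⟩
  have hmax : ((Icc (u - N.Tw u) u).filter fun s => i ∈ N.Jset s i).max = (u : WithBot ℤ) :=
    le_antisymm
      (Finset.max_le fun s hs => WithBot.coe_le_coe.2 (mem_Icc.1 (mem_filter.1 hs).1).2)
      (le_max hmem)
  rw [tauij, hmax]
  rfl

/-- One window of length `T + 1` per normal agent: after that many steps every normal agent
has dropped below the current upper level. -/
def roundLength : ℕ := (univ \ N.A).card * (N.T + 1)

/-- Reflecting all values around `c` turns lower bounds into upper bounds. -/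
def reflect (c : ℝ) : LFNetwork :=
  { N with
    x := fun t i => 2 * c - N.x t i
    xr := fun t i j => 2 * c - N.xr t i j
    recv_normal := fun t i j h => by rw [N.recv_normal t i j h]
    fr := fun t => 2 * c - N.fr t }

lemma FollowsSWMSR.reflect {N : LFNetwork} (c : ℝ) {i : N.V} (h : N.FollowsSWMSR i) :
    (N.reflect c).FollowsSWMSR i := by
  intro t ht
  obtain ⟨R, w, hiR, hR, hw, hsum, hupd⟩ := h t ht
  refine ⟨R, w, hiR, hR.reflect c, hw, hsum, ?_⟩
  change 2 * c - N.x (t + 1) i = ∑ j ∈ N.JT t i \ R, w j * (2 * c - N.xr (N.tauij t i j) i j)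
  simp only [mul_sub, sum_sub_distrib, ← sum_mul, hsum, ← hupd]
  ring

structure Takeover (t1 : ℤ) (c : ℝ) : Prop where
  follows : ∀ i ∉ N.A, N.FollowsSWMSR i
  start : N.t0 + N.T ≤ t1
  sends : ∀ t, t1 - N.T ≤ t → ∀ j ∈ N.A, ∀ i, j ∈ N.Vnbr t i → N.xr t i j = c

namespace Takeover

variable {N} {t1 : ℤ} {c : ℝ}

lemma reflect (h : N.Takeover t1 c) : (N.reflect c).Takeover t1 c where
  follows i hi := (h.follows i hi).reflect c
  start := h.start
  sends t ht j hj i hji := by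
    change 2 * c - N.xr t i j = c
    rw [h.sends t ht j hj i hji]
    ring

lemma received_le (h : N.Takeover t1 c) {u : ℤ} (hu : t1 ≤ u) {i : N.V} (hi : i ∉ N.A)
    {j : N.V} (hj : j ∈ N.JT u i) {B : ℝ} (hcB : c ≤ B)
    (hjB : j ∉ N.A → ∀ s ∈ Set.Icc (u - N.T) u, N.x s j ≤ B) :
    N.xr (N.tauij u i j) i j ≤ B := by
  obtain ⟨hτ, hjJ⟩ := N.tauij_spec hj
  rw [mem_Icc, N.Tw_of_le (by linarith [h.start])] at hτ
  by_cases hjA : j ∈ N.A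
  · have hjV : j ∈ N.Vnbr (N.tauij u i j) i :=
      (mem_insert.1 hjJ).resolve_left fun hji => hi (hji ▸ hjA)
    rw [h.sends _ (by omega) j hjA i hjV]
    exact hcB
  · rw [N.recv_normal _ _ _ hjA]
    exact hjB hjA _ ⟨by omega, hτ.2⟩

lemma step_le (h : N.Takeover t1 c) {u : ℤ} (hu : t1 ≤ u) {M ε : ℝ} (hcM : c ≤ M)
    (hε : 0 ≤ ε) (hM : ∀ s ∈ Set.Icc (u - N.T) u, ∀ j ∉ N.A, N.x s j ≤ M)
    {i : N.V} (hi : i ∉ N.A)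
    (hwit : ∀ R : Finset N.V, R.card ≤ 2 * N.F → i ∉ R →
      ∃ j ∈ N.JT u i \ R, N.xr (N.tauij u i j) i j ≤ M - ε) :
    N.x (u + 1) i ≤ M - N.α * ε := by
  obtain ⟨R, w, hiR, hR, hw, hsum, hupd⟩ := h.follows i hi u (by linarith [h.start])
  obtain ⟨j₀, hj₀, hj₀ε⟩ := hwit R hR.card_le hiR
  rw [hupd]
  exact sum_mul_le_sub_of_mem N.α_pos.le hw hsum
    (fun j hj => h.received_le hu hi (mem_sdiff.1 hj).1 hcM fun hjA s hs => hM s hs j hjA)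
    hj₀ hε hj₀ε

lemma step_le_of_le (h : N.Takeover t1 c) {u : ℤ} (hu : t1 ≤ u) {M ε : ℝ} (hcM : c ≤ M)
    (hε : 0 ≤ ε) (hM : ∀ s ∈ Set.Icc (u - N.T) u, ∀ j ∉ N.A, N.x s j ≤ M)
    {i : N.V} (hi : i ∉ N.A) (hxi : N.x u i ≤ M - ε) :
    N.x (u + 1) i ≤ M - N.α * ε := by
  have hu₀ : N.t0 ≤ u := by linarith [h.start]
  refine h.step_le hu hcM hε hM hi fun R _ hiR =>
    ⟨i, mem_sdiff.2 ⟨N.mem_JT_self hu₀ i, hiR⟩, ?_⟩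
  rwa [N.tauij_self hu₀, N.recv_normal _ _ _ hi]

lemma le_of_le_on_window (h : N.Takeover t1 c) {t : ℤ} (ht : t1 ≤ t) {M : ℝ} (hcM : c ≤ M)
    (hM : ∀ s ∈ Set.Icc (t - N.T) t, ∀ j ∉ N.A, N.x s j ≤ M) :
    ∀ s, t - N.T ≤ s → ∀ j ∉ N.A, N.x s j ≤ M := by
  have key : ∀ e : ℕ, ∀ s ∈ Set.Icc (t - N.T) (t + e), ∀ j ∉ N.A, N.x s j ≤ M := by
    intro e
    induction e with
    | zero => simpa using hM
    | succ e ih =>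
      rintro s ⟨hs₁, hs₂⟩ j hj
      rcases (show s ≤ t + e ∨ s = t + e + 1 by push_cast at hs₂; omega) with hs | rfl
      · exact ih s ⟨hs₁, hs⟩ j hj
      · have hxe : N.x (t + e) j ≤ M - 0 := by simpa using ih _ ⟨by omega, le_rfl⟩ j hj
        simpa using h.step_le_of_le (u := t + e) (by omega) hcM le_rfl
          (fun s hs => ih s ⟨by linarith [hs.1], hs.2⟩) hj hxe
  intro s hs j hj
  exact key (s - t).toNat s ⟨hs, by omega⟩ j hj

lemma le_sub_pow_mul_of_le (h : N.Takeover t1 c) {u : ℤ} (hu : t1 ≤ u) {M ε : ℝ}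
    (hcM : c ≤ M) (hε : 0 ≤ ε) (hM : ∀ s, u - N.T ≤ s → ∀ j ∉ N.A, N.x s j ≤ M)
    {i : N.V} (hi : i ∉ N.A) (hxi : N.x u i ≤ M - ε) (d : ℕ) :
    ∀ s ∈ Set.Icc u (u + d), N.x s i ≤ M - N.α ^ d * ε := by
  have hdecay : ∀ e : ℕ, N.x (u + e) i ≤ M - N.α ^ e * ε := by
    intro e
    induction e with
    | zero => simpa using hxi
    | succ e ih =>
      have := h.step_le_of_le (u := u + e) (by omega) hcM
        (mul_nonneg (pow_nonneg N.α_pos.le e) hε)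
        (fun s hs j hj => hM s (by linarith [hs.1]) j hj) hi ih
      rwa [pow_succ', mul_assoc, Nat.cast_succ, ← add_assoc]
  rintro s ⟨hs₁, hs₂⟩
  obtain ⟨e, rfl⟩ : ∃ e : ℕ, s = u + e := ⟨(s - u).toNat, by omega⟩
  have hpow : N.α ^ d ≤ N.α ^ e :=
    pow_le_pow_of_le_one N.α_pos.le N.α_lt_one.le (by omega)
  linarith [hdecay e, mul_le_mul_of_nonneg_right hpow hε]

lemma exists_fewer_high_agents (h : N.Takeover t1 c) (hrob : N.StronglyRobust (2 * N.F + 1) N.A)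
    {s₀ : ℤ} (hs₀ : t1 ≤ s₀) {M ε : ℝ} (hε : 0 ≤ ε) (hcε : c ≤ M - ε)
    (hM : ∀ s, s₀ - N.T ≤ s → ∀ j ∉ N.A, N.x s j ≤ M)
    {Y : Finset N.V} (hY : Y ⊆ univ \ N.A)
    (hout : ∀ j ∉ N.A, j ∉ Y → ∀ s ∈ Set.Icc (s₀ - N.T) s₀, N.x s j ≤ M - ε) :
    ∃ Y' ⊆ univ \ N.A, Y'.card ≤ Y.card - 1 ∧
      ∀ j ∉ N.A, j ∉ Y' → ∀ s ∈ Set.Icc (s₀ + 1) (s₀ + N.T + 1),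
        N.x s j ≤ M - N.α ^ (N.T + 1) * ε := by
  have hcM : c ≤ M := by linarith
  have hpersist : ∀ j ∉ N.A, j ∉ Y → ∀ s ∈ Set.Icc (s₀ + 1) (s₀ + N.T + 1),
      N.x s j ≤ M - N.α ^ (N.T + 1) * ε := fun j hj hjY s hs =>
    h.le_sub_pow_mul_of_le hs₀ hcM hε hM hj (hout j hj hjY s₀ ⟨by omega, le_rfl⟩) (N.T + 1)
      s ⟨by linarith [hs.1], by push_cast; linarith [hs.2]⟩
  rcases Y.eq_empty_or_nonempty with rfl | hYne
  · exact ⟨∅, empty_subset _, by simp, fun j hj _ => hpersist j hj (notMem_empty j)⟩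
  -- Robustness gives an agent of `Y` with `2F + 1` in-neighbours outside `Y` in the window;
  -- one of them survives the filtering and pulls it down.
  obtain ⟨i₀, hi₀Y, hreach⟩ := hrob s₀ (by linarith [h.start]) Y hYne hY
  have hi₀ : i₀ ∉ N.A := (mem_sdiff.1 (hY hi₀Y)).2
  have hstep : N.x (s₀ + 1) i₀ ≤ M - N.α * ε := by
    refine h.step_le hs₀ hcM hε (fun s hs => hM s hs.1) hi₀ fun R hR _ => ?_
    obtain ⟨j, hjZ, hjR⟩ := exists_mem_notMem_of_card_lt_card (hR.trans_lt hreach)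
    obtain ⟨hjN, hjY⟩ := mem_sdiff.1 hjZ
    have hjJ := N.biUnion_Vnbr_subset_JT (by linarith [h.start]) i₀ hjN
    exact ⟨j, mem_sdiff.2 ⟨hjJ, hjR⟩,
      h.received_le hs₀ hi₀ hjJ hcε fun hjA => hout j hjA hjY⟩
  refine ⟨Y.erase i₀, (erase_subset _ _).trans hY, (card_erase_of_mem hi₀Y).le,
    fun j hj hjY' s hs => ?_⟩
  by_cases hji : j = i₀
  · subst hji
    have := h.le_sub_pow_mul_of_le (u := s₀ + 1) (by omega) hcM (mul_nonneg N.α_pos.le hε)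
      (fun s hs => hM s (by omega)) hj hstep N.T s ⟨hs.1, by linarith [hs.2]⟩
    rwa [← mul_assoc, ← pow_succ] at this
  · exact hpersist j hj (fun hjY => hjY' (mem_erase.2 ⟨hji, hjY⟩)) s hs

lemma exists_high_agents_card_le (h : N.Takeover t1 c)
    (hrob : N.StronglyRobust (2 * N.F + 1) N.A) {t : ℤ} (ht : t1 ≤ t) {M : ℝ} (hcM : c ≤ M)
    (hM : ∀ s ∈ Set.Icc (t - N.T) t, ∀ j ∉ N.A, N.x s j ≤ M) (k : ℕ) :
    ∃ Y ⊆ univ \ N.A, Y.card ≤ (univ \ N.A).card - k ∧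
      ∀ j ∉ N.A, j ∉ Y → ∀ s ∈ Set.Icc (t + k * (N.T + 1) - N.T) (t + k * (N.T + 1)),
        N.x s j ≤ M - N.α ^ (k * (N.T + 1)) * (M - c) := by
  have hsafe := h.le_of_le_on_window ht hcM hM
  induction k with
  | zero =>
    refine ⟨univ \ N.A, subset_rfl, by simp, fun j hj hjY => ?_⟩
    exact absurd (mem_sdiff.2 ⟨mem_univ j, hj⟩) hjY
  | succ k ih =>
    obtain ⟨Y, hYA, hYcard, hY⟩ := ih
    have hpow : N.α ^ (k * (N.T + 1)) ≤ 1 := pow_le_one₀ N.α_pos.le N.α_lt_one.le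
    have hk : ((k + 1 : ℕ) : ℤ) * (N.T + 1) = k * (N.T + 1) + N.T + 1 := by push_cast; ring
    obtain ⟨Y', hY'A, hY'card, hY'⟩ := h.exists_fewer_high_agents hrob
      (s₀ := t + k * (N.T + 1)) (by nlinarith) (by have := N.α_pos; positivity)
      (by nlinarith) (fun s hs => hsafe s (by nlinarith)) hYA hY
    refine ⟨Y', hY'A, by omega, fun j hj hjY' s hs => ?_⟩
    have := hY' j hj hjY' s ⟨by linarith [hs.1], by linarith [hs.2]⟩
    rw [← mul_assoc, ← pow_add] at this
    convert this using 4
    ring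

lemma le_after_round (h : N.Takeover t1 c) (hrob : N.StronglyRobust (2 * N.F + 1) N.A)
    {t : ℤ} (ht : t1 ≤ t) {M : ℝ} (hcM : c ≤ M)
    (hM : ∀ s ∈ Set.Icc (t - N.T) t, ∀ j ∉ N.A, N.x s j ≤ M) :
    ∀ s, t + N.roundLength - N.T ≤ s → ∀ j ∉ N.A,
      N.x s j ≤ c + (1 - N.α ^ N.roundLength) * (M - c) := by
  obtain ⟨Y, -, hYcard, hY⟩ := h.exists_high_agents_card_le hrob ht hcM hM (univ \ N.A).card
  have hYe : Y = ∅ := card_eq_zero.1 (by omega)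
  have hwin : ∀ s ∈ Set.Icc (t + N.roundLength - N.T) (t + N.roundLength), ∀ j ∉ N.A,
      N.x s j ≤ c + (1 - N.α ^ N.roundLength) * (M - c) := fun s hs j hj => by
    have := hY j hj (by simp [hYe]) s (by simpa [roundLength] using hs)
    rw [roundLength]
    linarith
  have hcM' : c ≤ c + (1 - N.α ^ N.roundLength) * (M - c) := by
    have := pow_le_one₀ (n := N.roundLength) N.α_pos.le N.α_lt_one.le
    nlinarith
  exact h.le_of_le_on_window (by omega) hcM' hwin

lemma le_add_pow_mul (h : N.Takeover t1 c) (hrob : N.StronglyRobust (2 * N.F + 1) N.A)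
    {K : ℝ} (hK₀ : 0 ≤ K)
    (hK : ∀ s ∈ Set.Icc (t1 - N.T) t1, ∀ j ∉ N.A, N.x s j ≤ c + K)
    (k : ℕ) : ∀ s, t1 + k * N.roundLength - N.T ≤ s → ∀ j ∉ N.A,
      N.x s j ≤ c + (1 - N.α ^ N.roundLength) ^ k * K := by
  have hρ : 0 ≤ 1 - N.α ^ N.roundLength :=
    sub_nonneg.2 (pow_le_one₀ N.α_pos.le N.α_lt_one.le)
  induction k with
  | zero => simpa using h.le_of_le_on_window le_rfl (by linarith) hK
  | succ k ih =>
    have := h.le_after_round hrob (t := t1 + k * N.roundLength) (by nlinarith)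
      (by nlinarith [pow_nonneg hρ k]) (fun s hs => ih s hs.1)
    intro s hs j hj
    convert this s (by push_cast at hs; linarith) j hj using 1
    ring

lemma abs_sub_le_pow_mul (h : N.Takeover t1 c) (hrob : N.StronglyRobust (2 * N.F + 1) N.A)
    {K : ℝ} (hK₀ : 0 ≤ K)
    (hK : ∀ s ∈ Set.Icc (t1 - N.T) t1, ∀ j ∉ N.A, |N.x s j - c| ≤ K)
    (k : ℕ) {s : ℤ} (hs : t1 + k * N.roundLength ≤ s) {j : N.V} (hj : j ∉ N.A) :
    |N.x s j - c| ≤ (1 - N.α ^ N.roundLength) ^ k * K := by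
  have hupper := h.le_add_pow_mul hrob hK₀
    (fun s hs j hj => by linarith [le_abs_self (N.x s j - c), hK s hs j hj]) k s (by omega) j hj
  have hs' : t1 + k * N.roundLength - N.T ≤ s := by omega
  have hlower : 2 * c - N.x s j ≤ c + (1 - N.α ^ N.roundLength) ^ k * K :=
    h.reflect.le_add_pow_mul hrob hK₀ (fun s hs j hj => show 2 * c - N.x s j ≤ c + K by
      linarith [neg_abs_le (N.x s j - c), hK s hs j hj]) k s hs' j hj
  exact abs_sub_le_iff.2 ⟨by linarith, by linarith⟩

end Takeover

end LFNetwork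

theorem swmsr_adversarial_takeover_general (N : LFNetwork)
    (hrob : N.StronglyRobust (2 * N.F + 1) N.A)
    (hfollow : ∀ i : N.V, i ∉ N.A → N.FollowsSWMSR i)
    (t1 : ℤ) (ht1 : N.t0 + N.T ≤ t1) (c : ℝ)
    (hsend : ∀ t : ℤ, t1 - N.T ≤ t → ∀ j ∈ N.A, ∀ i : N.V, j ∈ N.Vnbr t i →
      N.xr t i j = c) :
    Filter.Tendsto
      (fun t : ℤ => sSup {y : ℝ | ∃ i : N.V, i ∉ N.A ∧ y = |N.x t i - c|})
      Filter.atTop (nhds 0) := by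
  have h : N.Takeover t1 c := ⟨hfollow, ht1, hsend⟩
  obtain ⟨K, hK₀, hK⟩ := exists_abs_le_of_finset (Icc (t1 - N.T) t1) fun s j => N.x s j - c
  have hα₀ := pow_pos N.α_pos N.roundLength
  have hα₁ := pow_le_one₀ (n := N.roundLength) N.α_pos.le N.α_lt_one.le
  refine tendsto_zero_of_eventually_le_pow_mul (ρ := 1 - N.α ^ N.roundLength) (K := K)
    (by linarith) (by linarith)
    (fun t => Real.sSup_nonneg (by rintro _ ⟨i, -, rfl⟩; positivity)) fun k => ?_
  refine eventually_atTop.2 ⟨t1 + k * N.roundLength, fun t ht => ?_⟩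
  refine Real.sSup_le ?_ (by positivity)
  rintro _ ⟨i, hi, rfl⟩
  exact h.abs_sub_le_pow_mul hrob hK₀ (fun s hs j _ => hK s (by simpa using hs) j) k ht hi

/-- in a leaderless network (`ℒ = ∅`) which is strongly
`(T,t0,2F+1)`-robust w.r.t. the misbehaving set `𝒜`, if every normal agent applies the
SW-MSR algorithm and every misbehaving agent sends the same constant value `c` to all of
its out-neighbors for all `t ≥ t1 - T` (where `t1 ≥ t0 + T`), then
`lim_{t→∞} max_{i ∈ 𝒱 \ 𝒜} |x_i[t] - c| = 0`. -/
theorem swmsr_adversarial_takeover (N : LFNetwork)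
    (hL : N.L = ∅)
    (hrob : N.StronglyRobust (2 * N.F + 1) N.A)
    (hfollow : ∀ i : N.V, i ∉ N.A → N.FollowsSWMSR i)
    (t1 : ℤ) (ht1 : N.t0 + N.T ≤ t1) (c : ℝ)
    (hsend : ∀ t : ℤ, t1 - N.T ≤ t → ∀ j ∈ N.A, ∀ i : N.V, j ∈ N.Vnbr t i →
      N.xr t i j = c) :
    Filter.Tendsto
      (fun t : ℤ => sSup {y : ℝ | ∃ i : N.V, i ∉ N.A ∧ y = |N.x t i - c|})
      Filter.atTop (nhds 0) :=
  swmsr_adversarial_takeover_general N hrob hfollow t1 ht1 c hsend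
end

section
/- Let n ≥ 2 and 1 ≤ k < n − 1 be integers, let r ∈ ℕ, and let L be a nonempty subset of the vertices of the k-circulant digraph C_n(1, 2, …, k). If there exists a set P_L of consecutive vertices with |P_L| ≤ k and |P_L ∩ L| ≥ r, then C_n(1, 2, …, k) is strongly r-robust with respect to L. -/
open Finset

/-!
Let `PL = {a, …, a + m - 1}` and let `i = a + m + t` be the first vertex of `C` at or after
`a + m`. Measured backwards from `i`, the `t` vertices of the gap `a + m, …, i - 1` and the
`≥ r` vertices of `PL ∩ L` lie outside `C`, so at least `t + r` of the `t + m` vertices just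
before `i` avoid `C`. The in-neighbors of `i` are the `k ≥ m` vertices just before it: they
contain all of those `t + m` or miss at most `t + m - k ≤ t` of them, so at least `r` in-neighbors
avoid `C`.
-/

theorem le_card_inter_Icc_one {X : Finset ℕ} {t m k r : ℕ} (hX : X ⊆ Icc 1 (t + m))
    (hcard : t + r ≤ #X) (hmk : m ≤ k) : r ≤ #(X ∩ Icc 1 k) := by
  have hout : #(X \ Icc 1 k) ≤ t + m - k := by
    calc #(X \ Icc 1 k) ≤ #(Icc (k + 1) (t + m)) := card_le_card fun j hj => by
            simp only [mem_sdiff, mem_Icc] at hj ⊢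
            have := hX hj.1
            simp only [mem_Icc] at this
            omega
      _ = t + m - k := by simp only [Nat.card_Icc]; omega
  have := card_inter_add_card_sdiff X (Icc 1 k)
  omega

section Circulant

variable {n : ℕ}

def circulantInNeighbors (k : ℕ) (i : ZMod n) : Finset (ZMod n) :=
  (Icc 1 k).image fun j : ℕ => i - j

theorem card_circulantInNeighbors_sdiff {k : ℕ} (hk : k < n) (i : ZMod n) (C : Finset (ZMod n)) :
    #(circulantInNeighbors k i \ C) = #((Icc 1 k).filter fun j : ℕ => i - j ∉ C) := by
  rw [circulantInNeighbors, sdiff_eq_filter, filter_image, card_image_of_injOn]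
  refine (sub_right_injective (b := i)).comp_injOn
    ((CharP.natCast_injOn_Iio (ZMod n) n).mono fun j hj => ?_)
  simp only [coe_filter, mem_Icc, Set.mem_ofPred_eq, Set.mem_Iio] at hj ⊢
  omega

theorem min_le_card_image_add_natCast_range (a : ZMod n) (m : ℕ) :
    min m n ≤ #((range m).image fun b : ℕ => a + b) :=
  calc min m n = #((range (min m n)).image fun b : ℕ => a + b) := by
        rw [card_image_of_injOn, card_range]
        exact (add_right_injective a).comp_injOn
          ((CharP.natCast_injOn_Iio (ZMod n) n).mono (by simp))
    _ ≤ _ := card_le_card (image_subset_image (range_subset_range.2 (min_le_left m n)))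

theorem image_sub_natCast_Icc (a : ZMod n) (t m : ℕ) :
    (Icc (t + 1) (t + m)).image (fun j : ℕ => a + ((m + t : ℕ) : ZMod n) - j) =
      (range m).image fun b : ℕ => a + b := by
  ext x
  simp only [mem_image, mem_Icc, mem_range]
  constructor
  · rintro ⟨j, hj, rfl⟩
    exact ⟨m + t - j, by omega, by push_cast [Nat.cast_sub (show j ≤ m + t by omega)]; ring⟩
  · rintro ⟨b, hb, rfl⟩
    exact ⟨m + t - b, by omega, by push_cast [Nat.cast_sub (show b ≤ m + t by omega)]; ring⟩

theorem exists_mem_le_card_circulantInNeighbors_sdiff [NeZero n] {k m r : ℕ} (hk : k < n)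
    (hmk : m ≤ k) (a : ZMod n) {L C : Finset (ZMod n)} (hC : C.Nonempty) (hCL : Disjoint C L)
    (hr : r ≤ #(((range m).image fun b : ℕ => a + b) ∩ L)) :
    ∃ i ∈ C, r ≤ #(circulantInNeighbors k i \ C) := by
  have hreach : ∃ s : ℕ, a + ((m + s : ℕ) : ZMod n) ∈ C := by
    obtain ⟨c, hc⟩ := hC
    refine ⟨(c - (a + m)).val, ?_⟩
    convert hc using 1
    push_cast [ZMod.natCast_zmod_val]
    ring
  set t := Nat.find hreach
  set i := a + ((m + t : ℕ) : ZMod n)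
  refine ⟨i, Nat.find_spec hreach, ?_⟩
  set X := (Icc 1 (t + m)).filter fun j : ℕ => i - j ∉ C
  set S := (Icc (t + 1) (t + m)).filter fun j : ℕ => i - j ∈ L
  have hgap : Icc 1 t ⊆ X := fun j hj => by
    simp only [mem_Icc] at hj
    refine mem_filter.2 ⟨mem_Icc.2 ⟨hj.1, by omega⟩, ?_⟩
    have hij : i - j = a + ((m + (t - j) : ℕ) : ZMod n) := by
      push_cast [i, Nat.cast_sub hj.2]
      ring
    exact hij ▸ Nat.find_min hreach (by omega)
  have hSX : S ⊆ X := fun j hj => by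
    simp only [S, mem_filter, mem_Icc] at hj
    exact mem_filter.2 ⟨mem_Icc.2 ⟨by omega, hj.1.2⟩, disjoint_right.1 hCL hj.2⟩
  have hrS : r ≤ #S := by
    rw [← image_sub_natCast_Icc a t m, ← filter_mem_eq_inter, filter_image] at hr
    exact hr.trans card_image_le
  have hX : t + r ≤ #X :=
    calc t + r ≤ #(Icc 1 t) + #S := by rw [Nat.card_Icc]; omega
      _ = #(Icc 1 t ∪ S) := (card_union_of_disjoint (disjoint_left.2 fun j hj hjS => by
            simp only [S, mem_Icc, mem_filter] at hj hjS
            omega)).symm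
      _ ≤ #X := card_le_card (union_subset hgap hSX)
  rw [card_circulantInNeighbors_sdiff hk]
  calc r ≤ #(X ∩ Icc 1 k) := le_card_inter_Icc_one (filter_subset _ _) hX hmk
    _ ≤ _ := card_le_card fun j hj => by
      simp only [X, mem_inter, mem_filter] at hj
      exact mem_filter.2 ⟨hj.2, hj.1.2⟩

end Circulant

theorem circulant_digraph_strongly_robust_general (n k : ℕ)
    (hk2 : k < n - 1) (r : ℕ) (L : Finset (ZMod n))
    (PL : Finset (ZMod n))
    (hconsec : ∃ (a : ZMod n) (m : ℕ), 1 ≤ m ∧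
      PL = (Finset.range m).image fun b : ℕ => a + (b : ZMod n))
    (hPLcard : PL.card ≤ k) (hPLr : r ≤ (PL ∩ L).card) :
    ∀ C : Finset (ZMod n), C.Nonempty → (∀ v ∈ C, v ∉ L) →
      ∃ i ∈ C, r ≤ (((Finset.Icc 1 k).image fun a : ℕ => i - (a : ZMod n)) \ C).card := by
  intro C hC hCL
  have : NeZero n := ⟨by omega⟩
  obtain ⟨a, m, -, rfl⟩ := hconsec
  have hmk : m ≤ k := by
    have := (min_le_card_image_add_natCast_range a m).trans hPLcard
    omega
  exact exists_mem_le_card_circulantInNeighbors_sdiff (by omega) hmk a hC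
    (disjoint_left.2 hCL) hPLr

/-- for integers `n ≥ 2` and `1 ≤ k < n - 1`, the `k`-circulant digraph
`C_n(1, …, k)` (vertex set `ZMod n`, with the in-neighbors of `i` being
`{i - a : 1 ≤ a ≤ k}`) is strongly `r`-robust with respect to a nonempty set `L` of
vertices whenever there is a set `PL` of consecutive vertices with `|PL| ≤ k` and
`|PL ∩ L| ≥ r`: every nonempty set `C` of vertices disjoint from `L` contains a vertex
with at least `r` in-neighbors outside `C`. -/
theorem circulant_digraph_strongly_robust (n k : ℕ) (hn : 2 ≤ n) (hk1 : 1 ≤ k)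
    (hk2 : k < n - 1) (r : ℕ) (L : Finset (ZMod n)) (hL : L.Nonempty)
    (PL : Finset (ZMod n))
    (hconsec : ∃ (a : ZMod n) (m : ℕ), 1 ≤ m ∧
      PL = (Finset.range m).image fun b : ℕ => a + (b : ZMod n))
    (hPLcard : PL.card ≤ k) (hPLr : r ≤ (PL ∩ L).card) :
    ∀ C : Finset (ZMod n), C.Nonempty → (∀ v ∈ C, v ∉ L) →
      ∃ i ∈ C, r ≤ (((Finset.Icc 1 k).image fun a : ℕ => i - (a : ZMod n)) \ C).card :=
  circulant_digraph_strongly_robust_general n k hk2 r L PL hconsec hPLcard hPLr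
end

section
/- Let n ≥ 2 and 1 ≤ k ≤ ⌈n/2⌉ − 1 be integers, let r ∈ ℕ, and let L be a nonempty subset of the vertices of the undirected k-circulant graph C_n(±1, ±2, …, ±k). If there exists a set P_L of consecutive vertices with |P_L| ≤ k and |P_L ∩ L| ≥ r, then C_n(±1, ±2, …, ±k) is strongly r-robust with respect to L. -/
/-!
Fix the consecutive block `PL = {a, a + 1, …, a + m - 1}`, so `m ≤ k`, and pick `i ∈ C` whose
offset `δ = (i - a).val` past `a` is least. The vertices `i - 1, …, i - δ` have smaller offsets,
so none lies in `C`. If `δ ≥ k`, the `k ≥ r` lower neighbours of `i` all lie outside `C`.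
If `δ < k`, every vertex of `PL` is within distance `k` of `i`, so `PL ∩ L` consists of
neighbours of `i`, and they lie outside `C` because `C` avoids `L`.
-/

open Finset

namespace Circulant

variable {n : ℕ}

def neighbors (k : ℕ) (i : ZMod n) : Finset (ZMod n) :=
  ((Icc 1 k).image fun a : ℕ => i - (a : ZMod n)) ∪
    ((Icc 1 k).image fun a : ℕ => i + (a : ZMod n))

theorem natCast_injOn_Iio : Set.InjOn (Nat.cast : ℕ → ZMod n) (Set.Iio n) := by
  intro s hs t ht h
  simpa [ZMod.val_cast_of_lt hs, ZMod.val_cast_of_lt ht] using congrArg ZMod.val h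

theorem card_image_add_range (a : ZMod n) {m : ℕ} (hm : m ≤ n) :
    ((range m).image fun s : ℕ => a + (s : ZMod n)).card = m := by
  rw [card_image_of_injOn, card_range]
  intro s hs t ht h
  simp only [coe_range, Set.mem_Iio] at hs ht
  exact natCast_injOn_Iio (Set.mem_Iio.2 (by omega)) (Set.mem_Iio.2 (by omega))
    (add_left_cancel h)

theorem card_image_sub_Icc (i : ZMod n) {k : ℕ} (hk : k < n) :
    ((Icc 1 k).image fun a : ℕ => i - (a : ZMod n)).card = k := by
  rw [card_image_of_injOn, Nat.card_Icc, Nat.add_sub_cancel]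
  intro s hs t ht h
  simp only [coe_Icc, Set.mem_Icc] at hs ht
  exact natCast_injOn_Iio (Set.mem_Iio.2 (by omega)) (Set.mem_Iio.2 (by omega))
    (sub_right_injective h)

theorem le_of_card_image_add_range_le (a : ZMod n) {m k : ℕ} (hk : k < n)
    (hcard : ((range m).image fun s : ℕ => a + (s : ZMod n)).card ≤ k) : m ≤ k := by
  by_contra! hkm
  have hsub : (range (k + 1)).image (fun s : ℕ => a + (s : ZMod n)) ⊆
      (range m).image fun s : ℕ => a + (s : ZMod n) :=
    image_subset_image (range_subset_range.2 hkm)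
  have := card_le_card hsub
  rw [card_image_add_range a (by omega : k + 1 ≤ n)] at this
  omega

theorem add_mem_insert_neighbors (a : ZMod n) {s t k : ℕ} (hst : s ≤ t + k)
    (hts : t ≤ s + k) :
    a + (s : ZMod n) ∈ insert (a + (t : ZMod n)) (neighbors k (a + (t : ZMod n))) := by
  rcases lt_trichotomy s t with hlt | rfl | hgt
  · refine mem_insert_of_mem (mem_union_left _ (mem_image.2 ⟨t - s, by simp; omega, ?_⟩))
    rw [Nat.cast_sub hlt.le]; ring
  · exact mem_insert_self _ _
  · refine mem_insert_of_mem (mem_union_right _ (mem_image.2 ⟨s - t, by simp; omega, ?_⟩))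
    rw [Nat.cast_sub hgt.le]; ring

theorem image_add_range_subset_insert_neighbors (a : ZMod n) {m k δ : ℕ} (hm : m ≤ k)
    (hδ : δ ≤ k) :
    (range m).image (fun s : ℕ => a + (s : ZMod n)) ⊆
      insert (a + (δ : ZMod n)) (neighbors k (a + (δ : ZMod n))) := by
  intro x hx
  obtain ⟨s, hs, rfl⟩ := mem_image.1 hx
  exact add_mem_insert_neighbors a (by simp at hs; omega) (by omega)

variable [NeZero n]

theorem val_sub_sub_natCast (a i : ZMod n) {j : ℕ} (hj : j ≤ (i - a).val) :
    (i - j - a).val = (i - a).val - j := by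
  have hjn : j < n := hj.trans_lt (ZMod.val_lt _)
  rw [sub_right_comm, ZMod.val_sub (by rwa [ZMod.val_cast_of_lt hjn]), ZMod.val_cast_of_lt hjn]

theorem disjoint_image_sub_Icc_of_isMin {C : Finset (ZMod n)} {a i : ZMod n} {k : ℕ}
    (hmin : ∀ c ∈ C, (i - a).val ≤ (c - a).val) (hk : k ≤ (i - a).val) :
    Disjoint ((Icc 1 k).image fun j : ℕ => i - (j : ZMod n)) C := by
  rw [disjoint_left]
  rintro _ hx hxC
  obtain ⟨j, hj, rfl⟩ := mem_image.1 hx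
  have hj : 1 ≤ j ∧ j ≤ k := mem_Icc.1 hj
  have := hmin _ hxC
  rw [val_sub_sub_natCast a i (by omega)] at this
  omega

end Circulant

open Circulant

theorem circulant_undirected_strongly_robust_general (n k : ℕ) (hn : 2 ≤ n)
    (hk2 : k ≤ (n + 1) / 2 - 1) (r : ℕ) (L : Finset (ZMod n))
    (PL : Finset (ZMod n))
    (hconsec : ∃ (a : ZMod n) (m : ℕ), 1 ≤ m ∧
      PL = (Finset.range m).image fun b : ℕ => a + (b : ZMod n))
    (hPLcard : PL.card ≤ k) (hPLr : r ≤ (PL ∩ L).card) :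
    ∀ C : Finset (ZMod n), C.Nonempty → (∀ v ∈ C, v ∉ L) →
      ∃ i ∈ C, r ≤
        ((((Finset.Icc 1 k).image fun a : ℕ => i - (a : ZMod n)) ∪
          ((Finset.Icc 1 k).image fun a : ℕ => i + (a : ZMod n))) \ C).card := by
  have : NeZero n := ⟨by omega⟩
  have hkn : k < n := by omega
  intro C hC hCL
  obtain ⟨a, m, -, rfl⟩ := hconsec
  have hmk : m ≤ k := le_of_card_image_add_range_le a hkn hPLcard
  obtain ⟨i, hiC, hmin⟩ := C.exists_min_image (fun c => (c - a).val) hC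
  refine ⟨i, hiC, ?_⟩
  change r ≤ (neighbors k i \ C).card
  rcases le_or_gt k (i - a).val with hfar | hnear
  · calc r ≤ k := hPLr.trans ((card_le_card inter_subset_left).trans hPLcard)
      _ = ((Icc 1 k).image fun j : ℕ => i - (j : ZMod n)).card := (card_image_sub_Icc i hkn).symm
      _ ≤ (neighbors k i \ C).card := card_le_card <| subset_sdiff.2
          ⟨subset_union_left, disjoint_image_sub_Icc_of_isMin hmin hfar⟩
  · have hPL := image_add_range_subset_insert_neighbors a hmk hnear.le
    rw [ZMod.natCast_zmod_val, add_sub_cancel] at hPL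
    refine hPLr.trans (card_le_card fun x hx => ?_)
    obtain ⟨hxPL, hxL⟩ := mem_inter.1 hx
    have hxC : x ∉ C := fun h => hCL x h hxL
    have hxi : x ≠ i := fun h => hxC (h ▸ hiC)
    exact mem_sdiff.2 ⟨(mem_insert.1 (hPL hxPL)).resolve_left hxi, hxC⟩

/-- for integers `n ≥ 2` and `1 ≤ k ≤ ⌈n/2⌉ - 1`, the undirected
`k`-circulant graph `C_n(±1, …, ±k)` (vertex set `ZMod n`, with the neighbors of `i`
being `{i - a : 1 ≤ a ≤ k} ∪ {i + a : 1 ≤ a ≤ k}`) is strongly `r`-robust with respect to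
a nonempty set `L` of vertices whenever there is a set `PL` of consecutive vertices with
`|PL| ≤ k` and `|PL ∩ L| ≥ r`: every nonempty set `C` of vertices disjoint from `L`
contains a vertex with at least `r` neighbors outside `C`. -/
theorem circulant_undirected_strongly_robust (n k : ℕ) (hn : 2 ≤ n) (hk1 : 1 ≤ k)
    (hk2 : k ≤ (n + 1) / 2 - 1) (r : ℕ) (L : Finset (ZMod n)) (hL : L.Nonempty)
    (PL : Finset (ZMod n))
    (hconsec : ∃ (a : ZMod n) (m : ℕ), 1 ≤ m ∧
      PL = (Finset.range m).image fun b : ℕ => a + (b : ZMod n))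
    (hPLcard : PL.card ≤ k) (hPLr : r ≤ (PL ∩ L).card) :
    ∀ C : Finset (ZMod n), C.Nonempty → (∀ v ∈ C, v ∉ L) →
      ∃ i ∈ C, r ≤
        ((((Finset.Icc 1 k).image fun a : ℕ => i - (a : ZMod n)) ∪
          ((Finset.Icc 1 k).image fun a : ℕ => i + (a : ZMod n))) \ C).card :=
  circulant_undirected_strongly_robust_general n k hn hk2 r L PL hconsec hPLcard hPLr
end

section
/- Let I be a nonempty finite set, F ∈ ℕ, v : I → ℝ, A ⊆ I with |A| ≤ F, and i ∈ I \ A. Let G = {j ∈ I : v(j) > v(i)} and H = {j ∈ I : v(j) < v(i)}. Suppose R_hi ⊆ G satisfies: R_hi = G if |G| ≤ F, and otherwise |R_hi| = F and v(j) ≥ v(k) for all j ∈ R_hi and all k ∈ G \ R_hi; and suppose R_lo ⊆ H satisfies the analogous condition with the inequalities reversed. Then for every j ∈ I \ (R_hi ∪ R_lo), one has min_{k ∈ I \ A} v(k) ≤ v(j) ≤ max_{k ∈ I \ A} v(k). In other words, every value surviving the MSR filtering lies between the minimum and maximum of the values held by non-adversarial indices. -/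
/-!
If a surviving value `v j` exceeds `v i`, then `j` lies in the set `G` of larger values but was
not removed, so `G` has more than `F` elements and `F` values at least `v j` were removed. At most
`F - 1` of them can come from adversarial indices once `j` itself is adversarial, so one removed
index is honest and bounds `v j` from above; if `j` is honest it bounds itself. The lower bound is
the same argument in the order dual.
-/

open Finset

section

variable {α β : Type*} [DecidableEq α]

theorem exists_mem_notMem_of_notMem_of_card_le {A R : Finset α} {j : α}
    (hjA : j ∈ A) (hjR : j ∉ R) (hcard : A.card ≤ R.card) : ∃ k ∈ R, k ∉ A := by
  by_contra! hRA
  have : (insert j R).card ≤ A.card := card_le_card (insert_subset hjA hRA)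
  rw [card_insert_of_notMem hjR] at this
  omega

theorem le_sup'_of_notMem_upperTrim [LinearOrder β] {I A R : Finset α} {F : ℕ} {v : α → β}
    {i : α} (hi : i ∈ I \ A) (hA : A.card ≤ F)
    (hRsub : R ⊆ I.filter fun j => v i < v j)
    (hR : if (I.filter fun j => v i < v j).card ≤ F
        then R = I.filter fun j => v i < v j
        else R.card = F ∧ ∀ j ∈ R, ∀ k ∈ (I.filter fun j => v i < v j) \ R, v k ≤ v j)
    {j : α} (hjI : j ∈ I) (hjR : j ∉ R) : v j ≤ (I \ A).sup' ⟨i, hi⟩ v := by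
  rcases le_or_gt (v j) (v i) with hji | hij
  · exact hji.trans (le_sup' v hi)
  by_cases hjA : j ∈ A
  case neg => exact le_sup' v (mem_sdiff.2 ⟨hjI, hjA⟩)
  have hjG : j ∈ I.filter fun k => v i < v k := mem_filter.2 ⟨hjI, hij⟩
  split_ifs at hR
  · exact absurd (hR ▸ hjG) hjR
  obtain ⟨hRcard, hRtop⟩ := hR
  obtain ⟨k, hkR, hkA⟩ :=
    exists_mem_notMem_of_notMem_of_card_le hjA hjR (hRcard ▸ hA)
  calc v j ≤ v k := hRtop k hkR j (mem_sdiff.2 ⟨hjG, hjR⟩)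
    _ ≤ (I \ A).sup' ⟨i, hi⟩ v := le_sup' v (mem_sdiff.2 ⟨(mem_filter.1 (hRsub hkR)).1, hkA⟩)

end

theorem msr_filter_bounds_general {α : Type*} [DecidableEq α]
    (I : Finset α) (F : ℕ) (v : α → ℝ) (A : Finset α) (hA : A.card ≤ F)
    (i : α) (hiI : i ∈ I) (hiA : i ∉ A)
    (Rhi Rlo : Finset α)
    (hRhiSub : Rhi ⊆ I.filter fun j => v i < v j)
    (hRhi : if (I.filter fun j => v i < v j).card ≤ F
        then Rhi = I.filter fun j => v i < v j
        else Rhi.card = F ∧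
          ∀ j ∈ Rhi, ∀ k ∈ (I.filter fun j => v i < v j) \ Rhi, v k ≤ v j)
    (hRloSub : Rlo ⊆ I.filter fun j => v j < v i)
    (hRlo : if (I.filter fun j => v j < v i).card ≤ F
        then Rlo = I.filter fun j => v j < v i
        else Rlo.card = F ∧
          ∀ j ∈ Rlo, ∀ k ∈ (I.filter fun j => v j < v i) \ Rlo, v j ≤ v k) :
    ∀ j ∈ I \ (Rhi ∪ Rlo),
      (I \ A).inf' ⟨i, Finset.mem_sdiff.mpr ⟨hiI, hiA⟩⟩ v ≤ v j ∧
      v j ≤ (I \ A).sup' ⟨i, Finset.mem_sdiff.mpr ⟨hiI, hiA⟩⟩ v := by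
  intro j hj
  simp only [mem_sdiff, mem_union, not_or] at hj
  obtain ⟨hjI, hjRhi, hjRlo⟩ := hj
  have hi : i ∈ I \ A := mem_sdiff.2 ⟨hiI, hiA⟩
  exact ⟨le_sup'_of_notMem_upperTrim (v := OrderDual.toDual ∘ v) hi hA hRloSub hRlo hjI hjRlo,
    le_sup'_of_notMem_upperTrim hi hA hRhiSub hRhi hjI hjRhi⟩

/-- MSR filtering property. Let `I` be a nonempty finite set, `v : I → ℝ`,
`A ⊆ I` with `|A| ≤ F`, and `i ∈ I \ A`. With `G = {j ∈ I : v j > v i}` and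
`H = {j ∈ I : v j < v i}`, suppose `Rhi ⊆ G` equals `G` if `|G| ≤ F` and otherwise has
`|Rhi| = F` with every element of `Rhi` carrying a value at least that of every element
of `G \ Rhi` (analogously for `Rlo ⊆ H` with inequalities reversed). Then every value
surviving the filtering lies between the minimum and maximum of the values held by
non-adversarial indices. -/
theorem msr_filter_bounds {α : Type*} [DecidableEq α]
    (I : Finset α) (F : ℕ) (v : α → ℝ) (A : Finset α) (hAI : A ⊆ I) (hA : A.card ≤ F)
    (i : α) (hiI : i ∈ I) (hiA : i ∉ A)
    (Rhi Rlo : Finset α)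
    (hRhiSub : Rhi ⊆ I.filter fun j => v i < v j)
    (hRhi : if (I.filter fun j => v i < v j).card ≤ F
        then Rhi = I.filter fun j => v i < v j
        else Rhi.card = F ∧
          ∀ j ∈ Rhi, ∀ k ∈ (I.filter fun j => v i < v j) \ Rhi, v k ≤ v j)
    (hRloSub : Rlo ⊆ I.filter fun j => v j < v i)
    (hRlo : if (I.filter fun j => v j < v i).card ≤ F
        then Rlo = I.filter fun j => v j < v i
        else Rlo.card = F ∧
          ∀ j ∈ Rlo, ∀ k ∈ (I.filter fun j => v j < v i) \ Rlo, v j ≤ v k) :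
    ∀ j ∈ I \ (Rhi ∪ Rlo),
      (I \ A).inf' ⟨i, Finset.mem_sdiff.mpr ⟨hiI, hiA⟩⟩ v ≤ v j ∧
      v j ≤ (I \ A).sup' ⟨i, Finset.mem_sdiff.mpr ⟨hiI, hiA⟩⟩ v :=
  msr_filter_bounds_general I F v A hA i hiI hiA Rhi Rlo hRhiSub hRhi hRloSub hRlo
end
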